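/- arXiv:1007.4011 — 8 statements merged into one kernel-verified Lean document; each statement's English description precedes it below -/
import Mathlib

section
/- Let M be a module of a graph G = (V,E). There exists an optimal edge-deletion set F (a minimum set of edges whose removal makes G P_4-free) such that M is a module of the resulting P_4-free graph H = (V, E \ F). -/
variable {V : Type*}

/-- `{a,b,c,d}` induces a path `a - b - c - d` on four vertices in `G`. -/
def IsInducedP4 (G : SimpleGraph V) (a b c d : V) : Prop :=
  a ≠ b ∧ a ≠ c ∧ a ≠ d ∧ b ≠ c ∧ b ≠ d ∧ c ≠ d ∧
  G.Adj a b ∧ G.Adj b c ∧ G.Adj c d ∧ ¬ G.Adj a c ∧ ¬ G.Adj a d ∧ ¬ G.Adj b d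

/-- `G` has no induced path on four vertices. -/
def P4Free (G : SimpleGraph V) : Prop := ∀ a b c d : V, ¬ IsInducedP4 G a b c d

/-- `M` is a module of `G`: every vertex outside `M` is adjacent to all or none of `M`. -/
def IsModule (G : SimpleGraph V) (M : Set V) : Prop :=
  ∀ x ∉ M, (∀ v ∈ M, G.Adj x v) ∨ (∀ v ∈ M, ¬ G.Adj x v)

/-- `F` is an edge-deletion set of `G`: a set of edges whose removal makes `G` `P₄`-free. -/
def IsDelSet (G : SimpleGraph V) (F : Set (Sym2 V)) : Prop :=
  F ⊆ G.edgeSet ∧ P4Free (G.deleteEdges F)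

/-- `F` is an optimal (minimum-cardinality) edge-deletion set of `G`. -/
def IsOptDelSet (G : SimpleGraph V) (F : Set (Sym2 V)) : Prop :=
  IsDelSet G F ∧ ∀ F' : Set (Sym2 V), IsDelSet G F' → F.ncard ≤ F'.ncard

/-!
Start from an optimal deletion set `F` and `H = G - F`. Pick `m ∈ M` with the most `H`-neighbours
outside `M` and rewire `H` so that every vertex of `M` has exactly the outside neighbours of `m`.
Since `M` is a module of `G` the result is still a subgraph of `G`, by the choice of `m` it has at
least as many edges as `H`, and `M` is a module of it. It is still `P₄`-free because `P₄` is prime: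
a `P₄` meets the module `M` in at most one vertex or lies inside it, and in either case (moving its
vertex in `M` to `m`) it is already an induced `P₄` of `H`.
-/

open SimpleGraph

section Module

variable {G : SimpleGraph V} {M : Set V}

theorem IsModule.adj_iff_adj (hM : IsModule G M) {x u v : V} (hx : x ∉ M) (hu : u ∈ M)
    (hv : v ∈ M) : G.Adj x u ↔ G.Adj x v := by
  rcases hM x hx with h | h
  · exact iff_of_true (h u hu) (h v hv)
  · exact iff_of_false (h u hu) (h v hv)

theorem IsModule.mem_of_adj_of_not_adj (hM : IsModule G M) {x u v : V} (hu : u ∈ M)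
    (hv : v ∈ M) (hxu : G.Adj x u) (hxv : ¬ G.Adj x v) : x ∈ M := by
  by_contra hx
  exact hxv ((hM.adj_iff_adj hx hu hv).mp hxu)

theorem isModule_empty : IsModule G ∅ := fun _ _ => Or.inl fun _ hv => hv.elim

end Module

section InducedP4

variable {W : Type*} {K : SimpleGraph V} {a b c d : V}

theorem IsInducedP4.map_of_adj_iff {H : SimpleGraph W} {f : V → W} (h : IsInducedP4 K a b c d)
    (hf : ∀ x ∈ ({a, b, c, d} : Set V), ∀ y ∈ ({a, b, c, d} : Set V),
      K.Adj x y ↔ H.Adj (f x) (f y)) :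
    IsInducedP4 H (f a) (f b) (f c) (f d) := by
  obtain ⟨-, -, -, -, -, -, hab, hbc, hcd, hac, had, hbd⟩ := h
  have hab' := (hf a (by simp) b (by simp)).mp hab
  have hbc' := (hf b (by simp) c (by simp)).mp hbc
  have hcd' := (hf c (by simp) d (by simp)).mp hcd
  have hac' := (hf a (by simp) c (by simp)).not.mp hac
  have had' := (hf a (by simp) d (by simp)).not.mp had
  have hbd' := (hf b (by simp) d (by simp)).not.mp hbd
  -- no two vertices of a `P₄` have the same neighbourhood, so `f` cannot identify any of them
  refine ⟨hab'.ne, fun e => had' (by rwa [e]), fun e => hbd' (by rw [← e]; exact hab'.symm),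
    hbc'.ne, fun e => had' (by rwa [← e]), hcd'.ne, hab', hbc', hcd', hac', had', hbd'⟩

theorem IsInducedP4.subset_of_isModule {M : Set V} (h : IsInducedP4 K a b c d)
    (hM : IsModule K M) {x y : V} (hx : x ∈ ({a, b, c, d} : Set V))
    (hy : y ∈ ({a, b, c, d} : Set V)) (hxy : x ≠ y) (hxM : x ∈ M) (hyM : y ∈ M) :
    ({a, b, c, d} : Set V) ⊆ M := by
  obtain ⟨-, -, -, -, -, -, hab, hbc, hcd, hac, had, hbd⟩ := h
  -- `P₄` is prime: every pair of its vertices is told apart by a third one, which must then lie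
  -- in the module as well
  have c_of_ab : a ∈ M → b ∈ M → c ∈ M := fun ha hb =>
    hM.mem_of_adj_of_not_adj hb ha hbc.symm (hac ·.symm)
  have d_of_ac : a ∈ M → c ∈ M → d ∈ M := fun ha hc =>
    hM.mem_of_adj_of_not_adj hc ha hcd.symm (had ·.symm)
  have b_of_ad : a ∈ M → d ∈ M → b ∈ M := fun ha hd =>
    hM.mem_of_adj_of_not_adj ha hd hab.symm hbd
  have a_of_bc : b ∈ M → c ∈ M → a ∈ M := fun hb hc =>
    hM.mem_of_adj_of_not_adj hb hc hab hac
  have a_of_bd : b ∈ M → d ∈ M → a ∈ M := fun hb hd =>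
    hM.mem_of_adj_of_not_adj hb hd hab had
  have b_of_cd : c ∈ M → d ∈ M → b ∈ M := fun hc hd =>
    hM.mem_of_adj_of_not_adj hc hd hbc hbd
  have hab_mem : a ∈ M ∧ b ∈ M := by
    simp only [Set.mem_insert_iff, Set.mem_singleton_iff] at hx hy
    rcases hx with rfl | rfl | rfl | rfl <;> rcases hy with rfl | rfl | rfl | rfl <;>
      first
      | exact absurd rfl hxy
      | exact ⟨‹_›, ‹_›⟩
      | exact ⟨‹_›, b_of_ad ‹_› (d_of_ac ‹_› ‹_›)⟩
      | exact ⟨‹_›, b_of_ad ‹_› ‹_›⟩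
      | exact ⟨a_of_bc ‹_› ‹_›, ‹_›⟩
      | exact ⟨a_of_bd ‹_› ‹_›, ‹_›⟩
      | exact ⟨a_of_bc (b_of_cd ‹_› ‹_›) ‹_›, b_of_cd ‹_› ‹_›⟩
  have hc := c_of_ab hab_mem.1 hab_mem.2
  simp [Set.insert_subset_iff, hab_mem, hc, d_of_ac hab_mem.1 hc]

end InducedP4

section Rewire

variable {G H : SimpleGraph V} {M : Set V} {m u v : V}

open Classical in
noncomputable def collapseOnto (M : Set V) (m v : V) : V := if v ∈ M then m else v

theorem collapseOnto_of_mem (hv : v ∈ M) : collapseOnto M m v = m := if_pos hv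

theorem collapseOnto_of_notMem (hv : v ∉ M) : collapseOnto M m v = v := if_neg hv

/-- Edges inside `M` and outside `M` are those of `H`, and every vertex of `M` gets the outside
neighbourhood that `m` has in `H`. -/
noncomputable def rewire (H : SimpleGraph V) (M : Set V) (m : V) : SimpleGraph V :=
  H.between M M ⊔ H.comap (collapseOnto M m)

theorem rewire_adj_of_mem (hu : u ∈ M) (hv : v ∈ M) : (rewire H M m).Adj u v ↔ H.Adj u v := by
  simp [rewire, between_adj, collapseOnto_of_mem, hu, hv]

theorem rewire_adj_of_not_and (h : ¬ (u ∈ M ∧ v ∈ M)) :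
    (rewire H M m).Adj u v ↔ H.Adj (collapseOnto M m u) (collapseOnto M m v) := by
  simp [rewire, between_adj, h]

theorem rewire_adj_of_notMem_of_mem (hu : u ∉ M) (hv : v ∈ M) :
    (rewire H M m).Adj u v ↔ H.Adj u m := by
  rw [rewire_adj_of_not_and (by tauto), collapseOnto_of_notMem hu, collapseOnto_of_mem hv]

theorem isModule_rewire : IsModule (rewire H M m) M := by
  intro x hx
  by_cases hxm : H.Adj x m
  · exact Or.inl fun v hv => (rewire_adj_of_notMem_of_mem hx hv).mpr hxm
  · exact Or.inr fun v hv => (rewire_adj_of_notMem_of_mem hx hv).not.mpr hxm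

theorem IsModule.adj_collapseOnto_iff (hM : IsModule G M) (hm : m ∈ M)
    (h : ¬ (u ∈ M ∧ v ∈ M)) :
    G.Adj (collapseOnto M m u) (collapseOnto M m v) ↔ G.Adj u v := by
  by_cases hu : u ∈ M <;> by_cases hv : v ∈ M
  · exact absurd ⟨hu, hv⟩ h
  · rw [collapseOnto_of_mem hu, collapseOnto_of_notMem hv, G.adj_comm, G.adj_comm u]
    exact hM.adj_iff_adj hv hm hu
  · rw [collapseOnto_of_notMem hu, collapseOnto_of_mem hv]
    exact hM.adj_iff_adj hu hm hv
  · rw [collapseOnto_of_notMem hu, collapseOnto_of_notMem hv]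

theorem rewire_le (hM : IsModule G M) (hle : H ≤ G) (hm : m ∈ M) : rewire H M m ≤ G := by
  intro u v huv
  by_cases h : u ∈ M ∧ v ∈ M
  · exact hle ((rewire_adj_of_mem h.1 h.2).mp huv)
  · exact (hM.adj_collapseOnto_iff hm h).mp (hle ((rewire_adj_of_not_and h).mp huv))

theorem p4Free_rewire (hH : P4Free H) : P4Free (rewire H M m) := by
  intro a b c d h
  by_cases hs : ({a, b, c, d} : Set V) ⊆ M
  · refine hH a b c d (h.map_of_adj_iff (f := id) fun x hx y hy => ?_)
    exact rewire_adj_of_mem (hs hx) (hs hy)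
  · refine hH _ _ _ _ (h.map_of_adj_iff (f := collapseOnto M m) fun x hx y hy => ?_)
    by_cases hxy : x = y
    · subst hxy
      exact iff_of_false (rewire H M m).irrefl H.irrefl
    · exact rewire_adj_of_not_and fun hM =>
        hs (h.subset_of_isModule isModule_rewire hx hy hxy hM.1 hM.2)

theorem rewire_sdiff_between :
    rewire H M m \ (rewire H M m).between M Mᶜ = H \ H.between M Mᶜ := by
  ext u v
  by_cases hu : u ∈ M <;> by_cases hv : v ∈ M
  · simp [between_adj, rewire_adj_of_mem hu hv, hu, hv]
  · simp [between_adj, hu, hv]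
  · simp [between_adj, hu, hv]
  · simp [between_adj, rewire_adj_of_not_and, collapseOnto_of_notMem, hu, hv]

theorem neighborSet_between_rewire (hm : m ∈ M) {v : V} (hv : v ∈ M) :
    ((rewire H M m).between M Mᶜ).neighborSet v = (H.between M Mᶜ).neighborSet m := by
  ext x
  by_cases hx : x ∈ M
  · simp [between_adj, hx, hv, hm]
  · simp only [mem_neighborSet, between_adj, Set.mem_compl_iff, hx, hv, hm]
    rw [adj_comm, rewire_adj_of_notMem_of_mem hx hv, adj_comm]

end Rewire

section EdgeCount

variable [Finite V]

theorem ncard_edgeSet_eq_sdiff_between_add (K : SimpleGraph V) (s t : Set V) :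
    K.edgeSet.ncard = (K \ K.between s t).edgeSet.ncard + (K.between s t).edgeSet.ncard := by
  rw [edgeSet_sdiff, Set.ncard_sdiff_add_ncard_of_subset (edgeSet_mono between_le)]

theorem ncard_edgeSet_between_compl_le {K K' : SimpleGraph V} {M : Set V}
    (h : ∀ v ∈ M,
      ((K.between M Mᶜ).neighborSet v).ncard ≤ ((K'.between M Mᶜ).neighborSet v).ncard) :
    (K.between M Mᶜ).edgeSet.ncard ≤ (K'.between M Mᶜ).edgeSet.ncard := by
  classical
  have := Fintype.ofFinite V
  have count (L : SimpleGraph V) : (L.between M Mᶜ).edgeSet.ncard =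
      ∑ v ∈ M.toFinset, ((L.between M Mᶜ).neighborSet v).ncard := by
    have hL : (L.between M Mᶜ).IsBipartiteWith ↑M.toFinset ↑Mᶜ.toFinset := by
      simpa using between_isBipartiteWith disjoint_compl_right
    rw [← coe_edgeFinset, Set.ncard_coe_finset, ← isBipartiteWith_sum_degrees_eq_card_edges hL]
    refine Finset.sum_congr rfl fun v _ => ?_
    rw [← card_neighborSet_eq_degree, ← Nat.card_eq_fintype_card, Nat.card_coe_set_eq]
  rw [count, count]
  exact Finset.sum_le_sum fun v hv => h v (Set.mem_toFinset.mp hv)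

theorem ncard_edgeSet_le_rewire {H : SimpleGraph V} {M : Set V} {m : V} (hm : m ∈ M)
    (hmax : ∀ v ∈ M, ((H.between M Mᶜ).neighborSet v).ncard ≤
      ((H.between M Mᶜ).neighborSet m).ncard) :
    H.edgeSet.ncard ≤ (rewire H M m).edgeSet.ncard := by
  rw [ncard_edgeSet_eq_sdiff_between_add H M Mᶜ,
    ncard_edgeSet_eq_sdiff_between_add (rewire H M m) M Mᶜ, rewire_sdiff_between]
  refine Nat.add_le_add_left (ncard_edgeSet_between_compl_le fun v hv => ?_) _
  rw [neighborSet_between_rewire hm hv]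
  exact hmax v hv

end EdgeCount

theorem p4Free_bot : P4Free (⊥ : SimpleGraph V) := fun _ _ _ _ h => h.2.2.2.2.2.2.1

theorem exists_isOptDelSet [Finite V] (G : SimpleGraph V) : ∃ F, IsOptDelSet G F := by
  have hG : IsDelSet G G.edgeSet := ⟨subset_rfl, by simpa using p4Free_bot⟩
  obtain ⟨F, hF, hmin⟩ :=
    Set.exists_min_image {F | IsDelSet G F} Set.ncard (Set.toFinite _) ⟨_, hG⟩
  exact ⟨F, hF, hmin⟩

theorem IsOptDelSet.of_ncard_edgeSet_le [Finite V] {G H : SimpleGraph V} {F : Set (Sym2 V)}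
    (hF : IsOptDelSet G F) (hle : H ≤ G) (hH : P4Free H)
    (hcard : (G.deleteEdges F).edgeSet.ncard ≤ H.edgeSet.ncard) :
    IsOptDelSet G (G.edgeSet \ H.edgeSet) := by
  refine ⟨⟨Set.sdiff_subset, by rwa [deleteEdges_sdiff_eq_of_le hle]⟩, fun F' hF' => ?_⟩
  refine le_trans ?_ (hF.2 F' hF')
  have hFeq : F = G.edgeSet \ (G.deleteEdges F).edgeSet := by
    rw [edgeSet_deleteEdges, Set.sdiff_sdiff_cancel_left hF.1.1]
  rw [hFeq, Set.ncard_sdiff (edgeSet_mono hle), Set.ncard_sdiff (edgeSet_mono (deleteEdges_le F))]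
  exact Nat.sub_le_sub_left hcard _

theorem stmt3 [Finite V] (G : SimpleGraph V) (M : Set V) (hM : IsModule G M) :
    ∃ F : Set (Sym2 V), IsOptDelSet G F ∧ IsModule (G.deleteEdges F) M := by
  obtain ⟨F, hF⟩ := exists_isOptDelSet G
  rcases M.eq_empty_or_nonempty with rfl | hne
  · exact ⟨F, hF, isModule_empty⟩
  set H := G.deleteEdges F
  obtain ⟨m, hm, hmax⟩ := M.exists_max_image (fun v => ((H.between M Mᶜ).neighborSet v).ncard)
    M.toFinite hne
  have hle : rewire H M m ≤ G := rewire_le hM (deleteEdges_le F) hm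
  refine ⟨G.edgeSet \ (rewire H M m).edgeSet,
    hF.of_ncard_edgeSet_le hle (p4Free_rewire hF.1.2) (ncard_edgeSet_le_rewire hm hmax), ?_⟩
  rw [deleteEdges_sdiff_eq_of_le hle]
  exact isModule_rewire
end

section
/- If G is a connected cograph on at least two vertices, then the complement of G is disconnected; equivalently, G is the series composition of two non-empty graphs. -/
variable {V : Type*}

/-!
Seinsche's argument, by induction on the number of vertices: for a vertex `v`, either `G - v` or
its complement is disconnected. Since `P₄` is self-complementary, `G` and `Gᶜ` play symmetric
roles, so we may assume that `Gᶜ - v` is disconnected. If a component of `Gᶜ - v` lies inside the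
neighbourhood `N(v)` of `v` in `G`, it is also a component of `Gᶜ`; if `N(v)` is empty, `v` is
isolated in `G`. Otherwise walk inside a component of `Gᶜ - v` from a vertex of `N(v)` to one
outside `N(v)`: this crosses a `Gᶜ`-edge `zy` with `z ∈ N(v)`, `y ∉ N(v)`, and a non-neighbour `u`
of `v` in another component of `Gᶜ - v` is `G`-adjacent to both, so that `v - z - u - y` is an
induced `P₄` of `G`.
-/

namespace SimpleGraph

variable {G : SimpleGraph V} {u w : V}

theorem not_preconnected_of_adj_mem {S : Set V} (hS : ∀ x y, x ∈ S → G.Adj x y → y ∈ S)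
    (hu : u ∈ S) (hw : w ∉ S) : ¬G.Preconnected := fun h => by
  obtain ⟨d, -, hd, hd'⟩ := (h u w).some.exists_boundary_dart S hu hw
  exact hd' (hS _ _ hd d.adj)

theorem not_preconnected_of_forall_not_adj (hu : ∀ x, ¬G.Adj u x) (hw : w ≠ u) :
    ¬G.Preconnected :=
  not_preconnected_of_adj_mem (S := {u}) (fun _ y hx hxy => absurd hxy (hx ▸ hu y)) rfl hw

theorem adj_of_not_reachable_compl (h : ¬Gᶜ.Reachable u w) : G.Adj u w := by
  by_contra hnadj
  exact h ((compl_adj G u w).2 ⟨fun huw => h (huw ▸ .rfl), hnadj⟩).reachable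

theorem induce_compl (s : Set V) : (G.induce s)ᶜ = Gᶜ.induce s := by
  ext x y
  simp [compl_adj, Subtype.ext_iff]

theorem not_preconnected_compl_of_reachable_imp_adj {v : V} (c : ({v}ᶜ : Set V))
    (hc : ∀ x, (Gᶜ.induce {v}ᶜ).Reachable c x → G.Adj v x) : ¬Gᶜ.Preconnected := by
  refine not_preconnected_of_adj_mem
    (S := Subtype.val '' {x | (Gᶜ.induce {v}ᶜ).Reachable c x}) ?_ ⟨c, .rfl, rfl⟩
    (fun ⟨x, _, hx⟩ => x.2 hx)
  rintro _ y ⟨x, hx, rfl⟩ hxy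
  have hy : y ≠ v := by
    rintro rfl
    exact ((compl_adj G _ _).1 hxy).2 (hc x hx).symm
  exact ⟨⟨y, hy⟩, hx.trans (Adj.reachable (G := Gᶜ.induce {v}ᶜ) hxy), rfl⟩

end SimpleGraph

open SimpleGraph

theorem P4Free.compl {G : SimpleGraph V} (h : P4Free G) : P4Free Gᶜ := by
  rintro a b c d ⟨hab, hac, had, hbc, hbd, hcd, hab', hbc', hcd', hac', had', hbd'⟩
  simp only [compl_adj, not_and, not_not] at hab' hbc' hcd' hac' had' hbd'
  exact h c a d b ⟨hac.symm, hcd, hbc.symm, had, hab, hbd.symm, (hac' hac).symm, had' had,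
    (hbd' hbd).symm, hcd'.2, fun hcb => hbc'.2 hcb.symm, hab'.2⟩

theorem P4Free.comap {W : Type*} {G : SimpleGraph W} (h : P4Free G) {f : V → W}
    (hf : Function.Injective f) : P4Free (G.comap f) := by
  rintro a b c d ⟨hab, hac, had, hbc, hbd, hcd, hP⟩
  exact h (f a) (f b) (f c) (f d)
    ⟨hf.ne hab, hf.ne hac, hf.ne had, hf.ne hbc, hf.ne hbd, hf.ne hcd, hP⟩

theorem P4Free.exists_reachable_imp_adj {G : SimpleGraph V} (hG : P4Free G) {v w : V}
    (hvw : G.Adj v w) (hH : ¬(Gᶜ.induce {v}ᶜ).Preconnected) :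
    ∃ c : ({v}ᶜ : Set V), ∀ x, (Gᶜ.induce {v}ᶜ).Reachable c x → G.Adj v x := by
  by_contra! hnon
  obtain ⟨t, hwt, hvt⟩ := hnon ⟨w, hvw.ne'⟩
  obtain ⟨⟨⟨z, y⟩, hzy⟩, -, hvz, hvy⟩ :=
    hwt.some.exists_boundary_dart {x | G.Adj v x} hvw hvt
  obtain ⟨c, hzc⟩ : ∃ c, ¬(Gᶜ.induce {v}ᶜ).Reachable z c := by
    by_contra! hz
    exact hH fun a b => (hz a).symm.trans (hz b)
  obtain ⟨u, hcu, hvu⟩ := hnon c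
  have hzu : ¬(Gᶜ.induce {v}ᶜ).Reachable z u := fun h => hzc (h.trans hcu.symm)
  have hyu : ¬(Gᶜ.induce {v}ᶜ).Reachable y u := fun h => hzu (hzy.reachable.trans h)
  have gzu : G.Adj z u :=
    adj_of_not_reachable_compl (G := G.induce {v}ᶜ) (by rwa [induce_compl])
  have gyu : G.Adj y u :=
    adj_of_not_reachable_compl (G := G.induce {v}ᶜ) (by rwa [induce_compl])
  have hzy' := (compl_adj G z y).1 hzy
  exact hG v z u y ⟨hvz.ne, Ne.symm u.2, Ne.symm y.2, gzu.ne, hzy'.1, gyu.ne.symm,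
    hvz, gzu, gyu.symm, hvu, hvy, hzy'.2⟩

theorem P4Free.not_preconnected_or_of_not_preconnected_induce_compl {G : SimpleGraph V}
    (hG : P4Free G) {v : V} (hH : ¬(Gᶜ.induce {v}ᶜ).Preconnected) :
    ¬G.Preconnected ∨ ¬Gᶜ.Preconnected := by
  by_cases hv : ∃ w, G.Adj v w
  · obtain ⟨w, hvw⟩ := hv
    obtain ⟨c, hc⟩ := hG.exists_reachable_imp_adj hvw hH
    exact Or.inr (not_preconnected_compl_of_reachable_imp_adj c hc)
  · obtain ⟨w, -⟩ : ∃ w b : ({v}ᶜ : Set V), ¬(Gᶜ.induce {v}ᶜ).Reachable w b := by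
      simpa [Preconnected] using hH
    exact Or.inl (not_preconnected_of_forall_not_adj (not_exists.1 hv) w.2)

theorem P4Free.not_preconnected_or_not_preconnected_compl [Finite V] {G : SimpleGraph V}
    (hG : P4Free G) (hV : 2 ≤ Nat.card V) : ¬G.Preconnected ∨ ¬Gᶜ.Preconnected := by
  obtain ⟨n, hn⟩ : ∃ n, Nat.card V = n := ⟨_, rfl⟩
  induction n using Nat.strong_induction_on generalizing V with
  | _ n ih =>
  obtain ⟨v⟩ : Nonempty V := Nat.card_pos_iff.1 (by omega) |>.1
  rcases (hn ▸ hV).eq_or_lt with h2 | h3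
  · obtain ⟨w, hw, huniq⟩ := (Nat.card_eq_two_iff' v).1 (hn.trans h2.symm)
    by_cases hvw : G.Adj v w
    · exact Or.inr (not_preconnected_compl_of_reachable_imp_adj ⟨w, hw⟩
        fun x _ => huniq x.1 x.2 ▸ hvw)
    · refine Or.inl (not_preconnected_of_forall_not_adj (fun x hvx => hvw ?_) hw)
      exact huniq x hvx.ne' ▸ hvx
  · have hcard : Nat.card ({v}ᶜ : Set V) = n - 1 := by
      rw [Nat.card_coe_set_eq, Set.ncard_compl, Set.ncard_singleton, hn]
    rcases ih (n - 1) (by omega) (G := G.induce {v}ᶜ) (hG.comap Subtype.val_injective)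
      (by omega) hcard with h | h
    · have := hG.compl.not_preconnected_or_of_not_preconnected_induce_compl
        (v := v) (by rwa [compl_compl])
      rwa [compl_compl, or_comm] at this
    · exact hG.not_preconnected_or_of_not_preconnected_induce_compl (by rwa [← induce_compl])

theorem stmt10 [Fintype V] (G : SimpleGraph V) (hconn : G.Connected)
    (hcog : P4Free G) (hcard : 2 ≤ Fintype.card V) :
    ¬ (Gᶜ).Connected ∧
      ∃ A B : Set V, A.Nonempty ∧ B.Nonempty ∧ Disjoint A B ∧ A ∪ B = Set.univ ∧
        ∀ a ∈ A, ∀ b ∈ B, G.Adj a b := by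
  have hcompl : ¬Gᶜ.Preconnected :=
    (hcog.not_preconnected_or_not_preconnected_compl (by rwa [Nat.card_eq_fintype_card]))
      |>.resolve_left (not_not.2 hconn.preconnected)
  refine ⟨fun h => hcompl h.preconnected, ?_⟩
  obtain ⟨a, b, hab⟩ : ∃ a b, ¬Gᶜ.Reachable a b := by simpa [Preconnected] using hcompl
  exact ⟨{x | Gᶜ.Reachable a x}, {x | Gᶜ.Reachable a x}ᶜ, ⟨a, .rfl⟩, ⟨b, hab⟩,
    disjoint_compl_right, Set.union_compl_self _,
    fun x hx y hy => adj_of_not_reachable_compl fun hxy => hy (hx.trans hxy)⟩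
end

section
/- Let G be a graph and let C be a connected component of G that is the series composition G_1 ⊗ G_2 of two graphs, and let G' be the graph obtained from G by replacing C with the parallel composition (disjoint union) G_1 ⊕ G_2. Then, for every k, (G, k) is a yes-instance of P_4-free edge deletion if and only if (G', k) is a yes-instance of P_4-free edge deletion. -/
variable {V : Type*}

/-- `(G, k)` is a yes-instance of `P₄`-free edge deletion. -/
def YesDel (G : SimpleGraph V) (k : ℕ) : Prop :=
  ∃ F : Set (Sym2 V), IsDelSet G F ∧ F.ncard ≤ k

theorem stmt11 [Finite V] (G : SimpleGraph V) (A B : Set V)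
    (hA : A.Nonempty) (hB : B.Nonempty) (hdisj : Disjoint A B)
    (hclosed : ∀ x ∈ A ∪ B, ∀ y ∉ A ∪ B, ¬ G.Adj x y)
    (hjoin : ∀ a ∈ A, ∀ b ∈ B, G.Adj a b) (k : ℕ) :
    YesDel G k ↔
      YesDel (G.deleteEdges {e : Sym2 V | ∃ a ∈ A, ∃ b ∈ B, e = s(a, b)}) k := by
  classical
  set D : Set (Sym2 V) := {e : Sym2 V | ∃ a ∈ A, ∃ b ∈ B, e = s(a, b)} with hDdef
  have hmemD : ∀ x y : V, s(x, y) ∈ D ↔ ((x ∈ A ∧ y ∈ B) ∨ (x ∈ B ∧ y ∈ A)) := by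
    intro x y
    constructor
    · rintro ⟨a, ha, b, hb, hab⟩
      rw [Sym2.eq_iff] at hab
      rcases hab with ⟨rfl, rfl⟩ | ⟨rfl, rfl⟩
      · exact Or.inl ⟨ha, hb⟩
      · exact Or.inr ⟨hb, ha⟩
    · rintro (⟨hx, hy⟩ | ⟨hx, hy⟩)
      · exact ⟨x, hx, y, hy, rfl⟩
      · exact ⟨y, hy, x, hx, Sym2.eq_swap.symm⟩
  set p : V → ℕ := fun x => if x ∈ A then 0 else if x ∈ B then 1 else 2 with hp
  have hBA : ∀ x, x ∈ B → x ∉ A := fun x hx => Set.disjoint_right.mp hdisj hx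
  have hp0 : ∀ x ∈ A, p x = 0 := by intro x hx; simp [hp, hx]
  have hp1 : ∀ x ∈ B, p x = 1 := by intro x hx; simp [hp, hBA x hx, hx]
  have hp2 : ∀ x, x ∉ A ∪ B → p x = 2 := by
    intro x hx
    rw [Set.mem_union] at hx
    push_neg at hx
    simp [hp, hx.1, hx.2]
  have hpD : ∀ x y, p x = p y → s(x, y) ∉ D := by
    intro x y hxy hmem
    rcases (hmemD x y).1 hmem with ⟨hx, hy⟩ | ⟨hx, hy⟩
    · rw [hp0 x hx, hp1 y hy] at hxy; omega
    · rw [hp1 x hx, hp0 y hy] at hxy; omega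
  have hclosed' : ∀ x y, G.Adj x y → (x ∈ A ∪ B ↔ y ∈ A ∪ B) := by
    intro x y hadj
    constructor
    · intro hx; by_contra hy; exact hclosed x hx y hy hadj
    · intro hy; by_contra hx; exact hclosed y hy x hx hadj.symm
  have hsame : ∀ x y, x ∈ A ∪ B → y ∈ A ∪ B → s(x, y) ∉ D → p x = p y := by
    intro x y hx hy hnd
    rcases hx with hx | hx <;> rcases hy with hy | hy
    · rw [hp0 x hx, hp0 y hy]
    · exact absurd ((hmemD x y).2 (Or.inl ⟨hx, hy⟩)) hnd
    · exact absurd ((hmemD x y).2 (Or.inr ⟨hx, hy⟩)) hnd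
    · rw [hp1 x hx, hp1 y hy]
  constructor
  · rintro ⟨F, ⟨hFsub, hFfree⟩, hFk⟩
    refine ⟨F \ D, ⟨?_, ?_⟩, ?_⟩
    · intro e he
      rw [SimpleGraph.edgeSet_deleteEdges]
      exact ⟨hFsub he.1, he.2⟩
    · intro a b c d hP4
      obtain ⟨hab, hac, had, hbc, hbd, hcd, h1, h2, h3, h4, h5, h6⟩ := hP4
      have key : ∀ x y, ((G.deleteEdges D).deleteEdges (F \ D)).Adj x y → p x = p y := by
        intro x y hadj
        rw [SimpleGraph.deleteEdges_adj, SimpleGraph.deleteEdges_adj] at hadj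
        obtain ⟨⟨hG, hnD⟩, _⟩ := hadj
        by_cases hx : x ∈ A ∪ B
        · exact hsame x y hx ((hclosed' x y hG).1 hx) hnD
        · have hy : y ∉ A ∪ B := fun hy => hx ((hclosed' x y hG).2 hy)
          rw [hp2 x hx, hp2 y hy]
      have pab := key _ _ h1
      have pbc := key _ _ h2
      have pcd := key _ _ h3
      have htrans : ∀ x y, p x = p y →
          (((G.deleteEdges D).deleteEdges (F \ D)).Adj x y ↔ (G.deleteEdges F).Adj x y) := by
        intro x y hxy
        have hnD := hpD x y hxy
        simp only [SimpleGraph.deleteEdges_adj, Set.mem_diff]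
        constructor
        · rintro ⟨⟨hG, _⟩, hnF⟩
          exact ⟨hG, fun hF => hnF ⟨hF, hnD⟩⟩
        · rintro ⟨hG, hnF⟩
          exact ⟨⟨hG, hnD⟩, fun h => hnF h.1⟩
      exact hFfree a b c d ⟨hab, hac, had, hbc, hbd, hcd,
        (htrans a b pab).1 h1, (htrans b c pbc).1 h2, (htrans c d pcd).1 h3,
        fun h => h4 ((htrans a c (pab.trans pbc)).2 h),
        fun h => h5 ((htrans a d (pab.trans (pbc.trans pcd))).2 h),
        fun h => h6 ((htrans b d (pbc.trans pcd)).2 h)⟩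
    · exact le_trans (Set.ncard_le_ncard Set.diff_subset (Set.toFinite F)) hFk
  · rintro ⟨F, ⟨hFsub, hFfree⟩, hFk⟩
    rw [SimpleGraph.edgeSet_deleteEdges] at hFsub
    refine ⟨F, ⟨fun e he => (hFsub he).1, ?_⟩, hFk⟩
    intro a b c d hP4
    obtain ⟨hab, hac, had, hbc, hbd, hcd, h1, h2, h3, h4, h5, h6⟩ := hP4
    have hcrossadj : ∀ x y, x ∈ A → y ∈ B → (G.deleteEdges F).Adj x y := by
      intro x y hx hy
      rw [SimpleGraph.deleteEdges_adj]
      exact ⟨hjoin x hx y hy, fun hmem => (hFsub hmem).2 ((hmemD x y).2 (Or.inl ⟨hx, hy⟩))⟩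
    have hnoncross : ∀ x y, ¬ (G.deleteEdges F).Adj x y → s(x, y) ∉ D := by
      intro x y hn hmem
      rcases (hmemD x y).1 hmem with ⟨hx, hy⟩ | ⟨hx, hy⟩
      · exact hn (hcrossadj x y hx hy)
      · exact hn (hcrossadj y x hy hx).symm
    have hadjG : ∀ x y, (G.deleteEdges F).Adj x y → G.Adj x y := by
      intro x y h
      rw [SimpleGraph.deleteEdges_adj] at h
      exact h.1
    have iab := hclosed' a b (hadjG _ _ h1)
    have ibc := hclosed' b c (hadjG _ _ h2)
    have icd := hclosed' c d (hadjG _ _ h3)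
    obtain ⟨pab, pac, pad, pbc, pbd, pcd⟩ :
        p a = p b ∧ p a = p c ∧ p a = p d ∧ p b = p c ∧ p b = p d ∧ p c = p d := by
      by_cases ha : a ∈ A ∪ B
      · have hb := iab.1 ha
        have hc := ibc.1 hb
        have hd := icd.1 hc
        have pac := hsame a c ha hc (hnoncross a c h4)
        have pad := hsame a d ha hd (hnoncross a d h5)
        have pbd := hsame b d hb hd (hnoncross b d h6)
        have pab : p a = p b := pad.trans pbd.symm
        exact ⟨pab, pac, pad, pab.symm.trans pac, pbd, pac.symm.trans pad⟩
      · have hb : b ∉ A ∪ B := fun h => ha (iab.2 h)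
        have hc : c ∉ A ∪ B := fun h => hb (ibc.2 h)
        have hd : d ∉ A ∪ B := fun h => hc (icd.2 h)
        rw [hp2 a ha, hp2 b hb, hp2 c hc, hp2 d hd]
        exact ⟨rfl, rfl, rfl, rfl, rfl, rfl⟩
    have htrans : ∀ x y, p x = p y →
        ((G.deleteEdges F).Adj x y ↔ ((G.deleteEdges D).deleteEdges F).Adj x y) := by
      intro x y hxy
      have hnD := hpD x y hxy
      simp only [SimpleGraph.deleteEdges_adj]
      constructor
      · rintro ⟨hG, hnF⟩
        exact ⟨⟨hG, hnD⟩, hnF⟩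
      · rintro ⟨⟨hG, _⟩, hnF⟩
        exact ⟨hG, hnF⟩
    exact hFfree a b c d ⟨hab, hac, had, hbc, hbd, hcd,
      (htrans a b pab).1 h1, (htrans b c pbc).1 h2, (htrans c d pcd).1 h3,
      fun h => h4 ((htrans a c pac).2 h),
      fun h => h5 ((htrans a d pad).2 h),
      fun h => h6 ((htrans b d pbd).2 h)⟩
end

section
/- If e is an edge of a graph G that belongs to a set P of at least k+1 induced P_4's of G such that any two distinct P_4's in P share only the edge e (their edge sets pairwise intersect exactly in {e}), and G can be made P_4-free by deleting at most k edges, then every edge-deletion set of size at most k contains e. -/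
variable {V : Type*}

/-- The three edges of the path `a - b - c - d`. -/
def p4Edges (a b c d : V) : Set (Sym2 V) := {s(a, b), s(b, c), s(c, d)}

/-! Every deletion set must contain one of the three edges of each induced `P₄`; if the `P₄`s
through `e` pairwise share only `e`, a deletion set avoiding `e` needs a distinct edge for each
of them, hence more than `k` edges. -/

theorem Set.ncard_le_ncard_of_hitting_sunflower {ι α : Type*} {P : Set ι} {E : ι → Set α}
    {F : Set α} {e : α} (hF : F.Finite) (heF : e ∉ F) (hhit : ∀ p ∈ P, (F ∩ E p).Nonempty)
    (hpair : ∀ p ∈ P, ∀ q ∈ P, p ≠ q → E p ∩ E q ⊆ {e}) :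
    P.ncard ≤ F.ncard := by
  have : Nonempty α := ⟨e⟩
  choose! f hfF hfE using hhit
  refine Set.ncard_le_ncard_of_injOn f hfF (fun p hp q hq hfpq => ?_) hF
  by_contra hpq
  have hfe : f p = e := hpair p hp q hq hpq ⟨hfE p hp, hfpq ▸ hfE q hq⟩
  exact heF (hfe ▸ hfF p hp)

theorem IsInducedP4.deleteEdges {G : SimpleGraph V} {F : Set (Sym2 V)} {a b c d : V}
    (h : IsInducedP4 G a b c d) (hF : Disjoint F (p4Edges a b c d)) :
    IsInducedP4 (G.deleteEdges F) a b c d := by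
  obtain ⟨hab, hac, had, hbc, hbd, hcd, gab, gbc, gcd, nac, nad, nbd⟩ := h
  have keep : ∀ {x y : V}, G.Adj x y → s(x, y) ∈ p4Edges a b c d →
      (G.deleteEdges F).Adj x y :=
    fun hxy hs => SimpleGraph.deleteEdges_adj.2 ⟨hxy, hF.notMem_of_mem_right hs⟩
  exact ⟨hab, hac, had, hbc, hbd, hcd,
    keep gab (by simp [p4Edges]), keep gbc (by simp [p4Edges]), keep gcd (by simp [p4Edges]),
    fun h => nac (SimpleGraph.deleteEdges_adj.1 h).1,
    fun h => nad (SimpleGraph.deleteEdges_adj.1 h).1,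
    fun h => nbd (SimpleGraph.deleteEdges_adj.1 h).1⟩

theorem IsInducedP4.inter_p4Edges_nonempty {G : SimpleGraph V} {F : Set (Sym2 V)} {a b c d : V}
    (h : IsInducedP4 G a b c d) (hfree : P4Free (G.deleteEdges F)) :
    (F ∩ p4Edges a b c d).Nonempty := by
  rw [← Set.not_disjoint_iff_nonempty_inter]
  exact fun hF => hfree a b c d (h.deleteEdges hF)

theorem stmt13_general [Finite V] (G : SimpleGraph V) (e : Sym2 V) (k : ℕ)
    (P : Set (V × V × V × V)) (hcard : k + 1 ≤ P.ncard)
    (hP4 : ∀ p ∈ P, IsInducedP4 G p.1 p.2.1 p.2.2.1 p.2.2.2 ∧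
      e ∈ p4Edges p.1 p.2.1 p.2.2.1 p.2.2.2)
    (hpair : ∀ p ∈ P, ∀ q ∈ P, p ≠ q →
      p4Edges p.1 p.2.1 p.2.2.1 p.2.2.2 ∩ p4Edges q.1 q.2.1 q.2.2.1 q.2.2.2 = {e}) :
    ∀ F : Set (Sym2 V), IsDelSet G F → F.ncard ≤ k → e ∈ F := by
  intro F hF hFk
  by_contra heF
  have hle : P.ncard ≤ F.ncard :=
    Set.ncard_le_ncard_of_hitting_sunflower F.toFinite heF
      (fun p hp => (hP4 p hp).1.inter_p4Edges_nonempty hF.2)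
      (fun p hp q hq hpq => (hpair p hp q hq hpq).subset)
  omega

theorem stmt13 [Finite V] (G : SimpleGraph V) (e : Sym2 V) (he : e ∈ G.edgeSet) (k : ℕ)
    (P : Set (V × V × V × V)) (hcard : k + 1 ≤ P.ncard)
    (hP4 : ∀ p ∈ P, IsInducedP4 G p.1 p.2.1 p.2.2.1 p.2.2.2 ∧
      e ∈ p4Edges p.1 p.2.1 p.2.2.1 p.2.2.2)
    (hpair : ∀ p ∈ P, ∀ q ∈ P, p ≠ q →
      p4Edges p.1 p.2.1 p.2.2.1 p.2.2.2 ∩ p4Edges q.1 q.2.1 q.2.2.1 q.2.2.2 = {e})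
    (hyes : ∃ F : Set (Sym2 V), IsDelSet G F ∧ F.ncard ≤ k) :
    ∀ F : Set (Sym2 V), IsDelSet G F → F.ncard ≤ k → e ∈ F :=
  stmt13_general G e k P hcard hP4 hpair
end

section
/- In the cotree of a cograph H, let u and v be two leaves (vertices of H) whose least common ancestor t is a parallel node, and suppose on the path from u to t there are consecutive non-leaf nodes s, p with s a series node that is the parent of the parallel node p, where p is an ancestor of u. If a is a leaf descendant of s not descending from p, and b is a leaf descendant of p lying in a different subtree of p than u, then in H: a is adjacent to both b and u, b is not adjacent to u, and neither a nor b is adjacent to v; moreover, if G is a supergraph of H with E(G) = E(H) ∪ {uv}, then {b, a, u, v} induces a P_4 in G. -/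
variable {V : Type*}

/-- A (binary) cotree over vertex type `V`: leaves are vertices, internal nodes are
series or parallel compositions. -/
inductive Cotree (V : Type) : Type
  | leaf : V → Cotree V
  | series : Cotree V → Cotree V → Cotree V
  | parallel : Cotree V → Cotree V → Cotree V

namespace Cotree

/-- The vertex `v` is a leaf (descendant) of the cotree `t`. -/
def memLeaf {V : Type} (v : V) : Cotree V → Prop
  | leaf w => v = w
  | series a b => memLeaf v a ∨ memLeaf v b
  | parallel a b => memLeaf v a ∨ memLeaf v b

/-- Adjacency in the cograph represented by a cotree: two vertices are adjacent iff
their least common ancestor is a series node. -/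
def adj {V : Type} (x y : V) : Cotree V → Prop
  | leaf _ => False
  | series a b => adj x y a ∨ adj x y b ∨ (memLeaf x a ∧ memLeaf y b) ∨ (memLeaf x b ∧ memLeaf y a)
  | parallel a b => adj x y a ∨ adj x y b

/-- The list of leaves of a cotree. -/
def leavesList {V : Type} : Cotree V → List V
  | leaf w => [w]
  | series a b => leavesList a ++ leavesList b
  | parallel a b => leavesList a ++ leavesList b

/-- `s` is a subtree (node) of `t`. -/
def Subtree {V : Type} (s : Cotree V) : Cotree V → Prop
  | leaf w => s = leaf w
  | series a b => s = series a b ∨ Subtree s a ∨ Subtree s b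
  | parallel a b => s = parallel a b ∨ Subtree s a ∨ Subtree s b

/-- The node `n` is the least common ancestor of the leaves `x` and `y`:
`x` and `y` lie in different children of `n`. -/
def IsLcaAt {V : Type} (x y : V) : Cotree V → Prop
  | leaf _ => False
  | series a b => (memLeaf x a ∧ memLeaf y b) ∨ (memLeaf x b ∧ memLeaf y a)
  | parallel a b => (memLeaf x a ∧ memLeaf y b) ∨ (memLeaf x b ∧ memLeaf y a)

end Cotree

namespace Cotree

lemma memLeaf_iff {V : Type} (x : V) (t : Cotree V) :
    memLeaf x t ↔ x ∈ leavesList t := by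
  induction t with
  | leaf w => simp [memLeaf, leavesList]
  | series a b iha ihb => simp [memLeaf, leavesList, iha, ihb]
  | parallel a b iha ihb => simp [memLeaf, leavesList, iha, ihb]

lemma subtree_memLeaf {V : Type} {x : V} {s t : Cotree V}
    (hst : Subtree s t) (hx : memLeaf x s) : memLeaf x t := by
  induction t with
  | leaf w => cases hst; exact hx
  | series a b iha ihb =>
    rcases hst with rfl | h | h
    · exact hx
    · exact Or.inl (iha h)
    · exact Or.inr (ihb h)
  | parallel a b iha ihb =>
    rcases hst with rfl | h | h
    · exact hx
    · exact Or.inl (iha h)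
    · exact Or.inr (ihb h)

lemma subtree_trans {V : Type} {r s t : Cotree V}
    (hrs : Subtree r s) (hst : Subtree s t) : Subtree r t := by
  induction t with
  | leaf w => cases hst; exact hrs
  | series a b iha ihb =>
    rcases hst with rfl | h | h
    · exact hrs
    · exact Or.inr (Or.inl (iha h))
    · exact Or.inr (Or.inr (ihb h))
  | parallel a b iha ihb =>
    rcases hst with rfl | h | h
    · exact hrs
    · exact Or.inr (Or.inl (iha h))
    · exact Or.inr (Or.inr (ihb h))

lemma adj_memLeaf {V : Type} {x y : V} {t : Cotree V}
    (h : adj x y t) : memLeaf x t ∧ memLeaf y t := by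
  induction t with
  | leaf w => exact h.elim
  | series a b iha ihb =>
    rcases h with h | h | ⟨h1, h2⟩ | ⟨h1, h2⟩
    · exact ⟨Or.inl (iha h).1, Or.inl (iha h).2⟩
    · exact ⟨Or.inr (ihb h).1, Or.inr (ihb h).2⟩
    · exact ⟨Or.inl h1, Or.inr h2⟩
    · exact ⟨Or.inr h1, Or.inl h2⟩
  | parallel a b iha ihb =>
    rcases h with h | h
    · exact ⟨Or.inl (iha h).1, Or.inl (iha h).2⟩
    · exact ⟨Or.inr (ihb h).1, Or.inr (ihb h).2⟩

lemma subtree_nodup {V : Type} {s t : Cotree V}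
    (hst : Subtree s t) (hnd : (leavesList t).Nodup) : (leavesList s).Nodup := by
  induction t with
  | leaf w => cases hst; exact hnd
  | series a b iha ihb =>
    have hnd' : (leavesList a ++ leavesList b).Nodup := hnd
    rcases hst with rfl | h | h
    · exact hnd
    · exact iha h hnd'.of_append_left
    · exact ihb h hnd'.of_append_right
  | parallel a b iha ihb =>
    have hnd' : (leavesList a ++ leavesList b).Nodup := hnd
    rcases hst with rfl | h | h
    · exact hnd
    · exact iha h hnd'.of_append_left
    · exact ihb h hnd'.of_append_right

lemma adj_localize {V : Type} {x y : V} {s t : Cotree V}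
    (hnd : (leavesList t).Nodup) (hst : Subtree s t)
    (hx : memLeaf x s) (hy : memLeaf y s) : adj x y t ↔ adj x y s := by
  induction t with
  | leaf w => cases hst; exact Iff.rfl
  | series a b iha ihb =>
    have hnd' : (leavesList a ++ leavesList b).Nodup := hnd
    have hdisj := List.disjoint_of_nodup_append hnd'
    rcases hst with rfl | h | h
    · exact Iff.rfl
    · have hxa := subtree_memLeaf h hx
      have hya := subtree_memLeaf h hy
      have hxb : ¬ memLeaf x b := fun hc =>
        hdisj ((memLeaf_iff x a).mp hxa) ((memLeaf_iff x b).mp hc)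
      have hyb : ¬ memLeaf y b := fun hc =>
        hdisj ((memLeaf_iff y a).mp hya) ((memLeaf_iff y b).mp hc)
      constructor
      · rintro (h' | h' | ⟨h1, h2⟩ | ⟨h1, h2⟩)
        · exact (iha hnd'.of_append_left h).mp h'
        · exact absurd (adj_memLeaf h').1 hxb
        · exact absurd h2 hyb
        · exact absurd h1 hxb
      · intro h'
        exact Or.inl ((iha hnd'.of_append_left h).mpr h')
    · have hxb := subtree_memLeaf h hx
      have hyb := subtree_memLeaf h hy
      have hxa : ¬ memLeaf x a := fun hc =>
        hdisj ((memLeaf_iff x a).mp hc) ((memLeaf_iff x b).mp hxb)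
      have hya : ¬ memLeaf y a := fun hc =>
        hdisj ((memLeaf_iff y a).mp hc) ((memLeaf_iff y b).mp hyb)
      constructor
      · rintro (h' | h' | ⟨h1, h2⟩ | ⟨h1, h2⟩)
        · exact absurd (adj_memLeaf h').1 hxa
        · exact (ihb hnd'.of_append_right h).mp h'
        · exact absurd h1 hxa
        · exact absurd h2 hya
      · intro h'
        exact Or.inr (Or.inl ((ihb hnd'.of_append_right h).mpr h'))
  | parallel a b iha ihb =>
    have hnd' : (leavesList a ++ leavesList b).Nodup := hnd
    have hdisj := List.disjoint_of_nodup_append hnd'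
    rcases hst with rfl | h | h
    · exact Iff.rfl
    · have hxa := subtree_memLeaf h hx
      have hya := subtree_memLeaf h hy
      have hxb : ¬ memLeaf x b := fun hc =>
        hdisj ((memLeaf_iff x a).mp hxa) ((memLeaf_iff x b).mp hc)
      constructor
      · rintro (h' | h')
        · exact (iha hnd'.of_append_left h).mp h'
        · exact absurd (adj_memLeaf h').1 hxb
      · intro h'
        exact Or.inl ((iha hnd'.of_append_left h).mpr h')
    · have hxb := subtree_memLeaf h hx
      have hyb := subtree_memLeaf h hy
      have hxa : ¬ memLeaf x a := fun hc =>
        hdisj ((memLeaf_iff x a).mp hc) ((memLeaf_iff x b).mp hxb)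
      constructor
      · rintro (h' | h')
        · exact absurd (adj_memLeaf h').1 hxa
        · exact (ihb hnd'.of_append_right h).mp h'
      · intro h'
        exact Or.inr ((ihb hnd'.of_append_right h).mpr h')

end Cotree

lemma Cotree.subtree_refl {V : Type} (t : Cotree V) : Cotree.Subtree t t := by
  cases t with
  | leaf w => rfl
  | series a b => exact Or.inl rfl
  | parallel a b => exact Or.inl rfl

/-- The cotree `T` represents the cograph `H` (with distinct leaves):
inside a subtree `parallel t₁ t₂` of `T` whose children separate `u` (in `t₁`) and `v`
(in `t₂`) — so that `parallel t₁ t₂` is the least common ancestor of `u` and `v` —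
there is a subtree `series (parallel p₁ p₂) s₂` of `t₁`: the series node `s` is the
parent of the parallel node `p = parallel p₁ p₂` which is an ancestor of `u` (here
`u` is a leaf of `p₁`), `a` is a leaf descendant of `s` not descending from `p` (a
leaf of `s₂`) and `b` is a leaf of `p` in a different subtree of `p` than `u` (a leaf
of `p₂`). Then `a` is adjacent in `H` to both `b` and `u`, `b` is not adjacent to `u`,
neither `a` nor `b` is adjacent to `v`, and in the supergraph `G` of `H` obtained by
adding the single edge `uv`, the four vertices `{b, a, u, v}` induce a `P₄`. -/
theorem stmt15 {V : Type} (H G : SimpleGraph V) (T : Cotree V)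
    (hrep : ∀ x y : V, H.Adj x y ↔ Cotree.adj x y T)
    (hnodup : (Cotree.leavesList T).Nodup)
    (u v a b : V) (t₁ t₂ p₁ p₂ s₂ : Cotree V)
    (ht : Cotree.Subtree (Cotree.parallel t₁ t₂) T)
    (hv : Cotree.memLeaf v t₂)
    (hs : Cotree.Subtree (Cotree.series (Cotree.parallel p₁ p₂) s₂) t₁)
    (hu : Cotree.memLeaf u p₁)
    (hb : Cotree.memLeaf b p₂)
    (ha : Cotree.memLeaf a s₂)
    (huv : u ≠ v)
    (hG : ∀ x y : V, G.Adj x y ↔ H.Adj x y ∨ s(x, y) = s(u, v)) :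
    H.Adj a b ∧ H.Adj a u ∧ ¬ H.Adj b u ∧ ¬ H.Adj a v ∧ ¬ H.Adj b v ∧
      IsInducedP4 G b a u v := by
  
  classical
  open Cotree in
  -- abbreviations
  have hst1 : Subtree t₁ (parallel t₁ t₂) := Or.inr (Or.inl (subtree_refl t₁))
  have ht1T : Subtree t₁ T := subtree_trans hst1 ht
  have hsT : Subtree (series (parallel p₁ p₂) s₂) T := subtree_trans hs ht1T
  have hpS : Subtree (parallel p₁ p₂) (series (parallel p₁ p₂) s₂) :=
    Or.inr (Or.inl (subtree_refl _))
  have hpT : Subtree (parallel p₁ p₂) T := subtree_trans hpS hsT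
  -- memberships
  have huS : memLeaf u (series (parallel p₁ p₂) s₂) := Or.inl (Or.inl hu)
  have hbS : memLeaf b (series (parallel p₁ p₂) s₂) := Or.inl (Or.inr hb)
  have haS : memLeaf a (series (parallel p₁ p₂) s₂) := Or.inr ha
  have hut1 : memLeaf u t₁ := subtree_memLeaf hs huS
  have hbt1 : memLeaf b t₁ := subtree_memLeaf hs hbS
  have hat1 : memLeaf a t₁ := subtree_memLeaf hs haS
  -- nodup facts
  have ndPar : (leavesList (parallel t₁ t₂)).Nodup := subtree_nodup ht hnodup
  have ndP : (leavesList (parallel p₁ p₂)).Nodup := subtree_nodup hpT hnodup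
  have hdisjPar : (leavesList t₁).Disjoint (leavesList t₂) :=
    List.disjoint_of_nodup_append ndPar
  have hdisjP : (leavesList p₁).Disjoint (leavesList p₂) :=
    List.disjoint_of_nodup_append ndP
  have hvT1 : ¬ memLeaf v t₁ := fun hc =>
    hdisjPar ((memLeaf_iff v t₁).mp hc) ((memLeaf_iff v t₂).mp hv)
  have hbP1 : ¬ memLeaf b p₁ := fun hc =>
    hdisjP ((memLeaf_iff b p₁).mp hc) ((memLeaf_iff b p₂).mp hb)
  have huP2 : ¬ memLeaf u p₂ := fun hc =>
    hdisjP ((memLeaf_iff u p₁).mp hu) ((memLeaf_iff u p₂).mp hc)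
  -- adjacencies in H
  have hab : H.Adj a b := by
    rw [hrep, adj_localize hnodup hsT haS hbS]
    exact Or.inr (Or.inr (Or.inr ⟨ha, Or.inr hb⟩))
  have hau : H.Adj a u := by
    rw [hrep, adj_localize hnodup hsT haS huS]
    exact Or.inr (Or.inr (Or.inr ⟨ha, Or.inl hu⟩))
  have hbu : ¬ H.Adj b u := by
    rw [hrep, adj_localize hnodup hpT (Or.inr hb) (Or.inl hu)]
    rintro (h' | h')
    · exact hbP1 (adj_memLeaf h').1
    · exact huP2 (adj_memLeaf h').2
  have hav : ¬ H.Adj a v := by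
    rw [hrep, adj_localize hnodup ht (Or.inl hat1) (Or.inr hv)]
    rintro (h' | h')
    · exact hvT1 (adj_memLeaf h').2
    · exact hdisjPar ((memLeaf_iff a t₁).mp hat1)
        ((memLeaf_iff a t₂).mp (adj_memLeaf h').1)
  have hbv : ¬ H.Adj b v := by
    rw [hrep, adj_localize hnodup ht (Or.inl hbt1) (Or.inr hv)]
    rintro (h' | h')
    · exact hvT1 (adj_memLeaf h').2
    · exact hdisjPar ((memLeaf_iff b t₁).mp hbt1)
        ((memLeaf_iff b t₂).mp (adj_memLeaf h').1)
  -- distinctness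
  have hne_ab : a ≠ b := hab.ne
  have hne_au : a ≠ u := hau.ne
  have hne_bu : b ≠ u := fun h => hbP1 (h ▸ hu)
  have hne_av : a ≠ v := fun h =>
    hvT1 (h ▸ hat1)
  have hne_bv : b ≠ v := fun h =>
    hvT1 (h ▸ hbt1)
  refine ⟨hab, hau, hbu, hav, hbv, hne_ab.symm, hne_bu, hne_bv, hne_au, hne_av, huv,
    ?_, ?_, ?_, ?_, ?_, ?_⟩
  · exact (hG b a).mpr (Or.inl hab.symm)
  · exact (hG a u).mpr (Or.inl hau)
  · exact (hG u v).mpr (Or.inr rfl)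
  · intro h
    rcases (hG b u).mp h with h' | h'
    · exact hbu h'
    · rcases Sym2.eq_iff.mp h' with ⟨h1, h2⟩ | ⟨h1, h2⟩
      · exact hne_bu h1
      · exact hne_bv h1
  · intro h
    rcases (hG b v).mp h with h' | h'
    · exact hbv h'
    · rcases Sym2.eq_iff.mp h' with ⟨h1, h2⟩ | ⟨h1, h2⟩
      · exact hne_bu h1
      · exact hne_bv h1
  · intro h
    rcases (hG a v).mp h with h' | h'
    · exact hav h'
    · rcases Sym2.eq_iff.mp h' with ⟨h1, h2⟩ | ⟨h1, h2⟩
      · exact hne_au h1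
      · exact hne_av h1
end

section
/- In a graph G reduced so that every module strictly contained in a connected component is an independent set of size at most k+1 (and no component is a series composition or a cograph), if G can be made P_4-free by deleting a set F of at most k edges yielding cograph H with cotree T, then T has at most 2k affected leaves and at most 2k affected internal nodes, where a leaf is affected if its vertex is incident to an edge of F and an internal node is affected if it is the least common ancestor of two affected leaves. -/
variable {V : Type*}

/-! Every edge of `F` has two ends, so at most `2|F| ≤ 2k` leaves are affected. A node that is
the least common ancestor of two affected leaves has affected leaves below both of its children,
so by induction on the cotree a subtree with `m ≥ 1` affected leaves contains at most `m - 1`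
such nodes. -/

open Set

theorem Sym2.ncard_setOf_mem_le_two {V : Type*} (e : Sym2 V) : {x | x ∈ e}.ncard ≤ 2 := by
  induction e using Sym2.ind with
  | _ u w =>
    have hpair : {x | x ∈ s(u, w)} = {u, w} := by ext; simp
    rw [hpair]
    exact (ncard_insert_le u {w}).trans (by simp)

theorem ncard_setOf_exists_mem_sym2_le {V : Type*} {F : Set (Sym2 V)} (hF : F.Finite) :
    {x : V | ∃ e ∈ F, x ∈ e}.ncard ≤ 2 * F.ncard := by
  have hunion : {x : V | ∃ e ∈ F, x ∈ e} = ⋃ e ∈ hF.toFinset, {x | x ∈ e} := by ext; simp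
  calc {x : V | ∃ e ∈ F, x ∈ e}.ncard
      ≤ ∑ e ∈ hF.toFinset, {x | x ∈ e}.ncard := hunion ▸ Finset.set_ncard_biUnion_le _ _
    _ ≤ hF.toFinset.card • 2 :=
        Finset.sum_le_card_nsmul _ _ _ fun e _ => e.ncard_setOf_mem_le_two
    _ = 2 * F.ncard := by rw [smul_eq_mul, mul_comm, ncard_eq_toFinset_card F hF]

theorem ncard_le_ncard_union_sub_one {α β : Type*} {L La Lb : Set α} {r : α} {A B : Set β}
    (hLa : La.Finite) (hLb : Lb.Finite) (hA : A.Finite) (hB : B.Finite) (hAB : Disjoint A B)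
    (hsub : L ⊆ insert r (La ∪ Lb)) (hr : r ∈ L → A.Nonempty ∧ B.Nonempty)
    (ha : La.ncard ≤ A.ncard - 1) (hb : Lb.ncard ≤ B.ncard - 1) :
    L.ncard ≤ (A ∪ B).ncard - 1 := by
  rw [ncard_union_eq hAB hA hB]
  have hunion := ncard_union_le La Lb
  by_cases hrL : r ∈ L
  · obtain ⟨hAne, hBne⟩ := hr hrL
    have hApos := (ncard_pos hA).2 hAne
    have hBpos := (ncard_pos hB).2 hBne
    have hL := ncard_le_ncard hsub ((hLa.union hLb).insert r)
    have hinsert := ncard_insert_le r (La ∪ Lb)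
    omega
  · have hsub' : L ⊆ La ∪ Lb := fun n hn => (hsub hn).resolve_left (by rintro rfl; exact hrL hn)
    have hL := ncard_le_ncard hsub' (hLa.union hLb)
    omega

namespace Cotree

variable {V : Type}

def leafSet (t : Cotree V) : Set V := {v | memLeaf v t}

def lcaNodes (S : Set V) (t : Cotree V) : Set (Cotree V) :=
  {n | Subtree n t ∧ ∃ x y : V, x ≠ y ∧ x ∈ S ∧ y ∈ S ∧ IsLcaAt x y n}

theorem memLeaf_iff_mem_leavesList (v : V) (t : Cotree V) : memLeaf v t ↔ v ∈ leavesList t := by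
  induction t with
  | leaf w => simp [memLeaf, leavesList]
  | series a b iha ihb | parallel a b iha ihb => simp [memLeaf, leavesList, iha, ihb]

theorem finite_leafSet (t : Cotree V) : t.leafSet.Finite :=
  (List.finite_toSet t.leavesList).subset fun v hv => (memLeaf_iff_mem_leavesList v t).1 hv

theorem finite_setOf_subtree (t : Cotree V) : {n | Subtree n t}.Finite := by
  induction t with
  | leaf w => simp [Subtree]
  | series a b iha ihb | parallel a b iha ihb =>
    exact ((iha.union ihb).insert _).subset fun n hn => by simpa [Subtree] using hn

theorem finite_lcaNodes (S : Set V) (t : Cotree V) : (lcaNodes S t).Finite :=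
  (finite_setOf_subtree t).subset fun _ hn => hn.1

theorem ncard_lcaNodes_le (S : Set V) (t : Cotree V) (ht : t.leavesList.Nodup) :
    (lcaNodes S t).ncard ≤ (S ∩ t.leafSet).ncard - 1 := by
  induction t with
  | leaf w =>
    have hempty : lcaNodes S (leaf w) = ∅ :=
      eq_empty_of_forall_notMem fun n ⟨hn, _, _, _, _, _, hlca⟩ => by cases hn; exact hlca
    simp [hempty]
  | series a b iha ihb | parallel a b iha ihb =>
    rw [leavesList, List.nodup_append] at ht
    obtain ⟨hta, htb, hab⟩ := ht
    apply (ncard_le_ncard_union_sub_one (finite_lcaNodes S a) (finite_lcaNodes S b)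
      ((finite_leafSet a).inter_of_right S) ((finite_leafSet b).inter_of_right S) ?hAB ?hsub ?hr
      (iha hta) (ihb htb)).trans_eq
    case hsub =>
      rintro n ⟨hn, hlca⟩
      rcases hn with rfl | hn | hn
      · exact mem_insert _ _
      · exact mem_insert_of_mem _ (Or.inl ⟨hn, hlca⟩)
      · exact mem_insert_of_mem _ (Or.inr ⟨hn, hlca⟩)
    case hAB =>
      exact disjoint_left.2 fun v ⟨_, hva⟩ ⟨_, hvb⟩ => hab v
        ((memLeaf_iff_mem_leavesList v a).1 hva) v ((memLeaf_iff_mem_leavesList v b).1 hvb) rfl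
    case hr =>
      rintro ⟨-, x, y, -, hx, hy, ⟨hxa, hyb⟩ | ⟨hxb, hya⟩⟩
      · exact ⟨⟨x, hx, hxa⟩, ⟨y, hy, hyb⟩⟩
      · exact ⟨⟨y, hy, hya⟩, ⟨x, hx, hxb⟩⟩
    congr 2
    ext
    simp [leafSet, memLeaf, and_or_left]

end Cotree

theorem stmt16_general {V : Type} [Finite V] (k : ℕ)
    (F : Set (Sym2 V)) (hk : F.ncard ≤ k)
    (T : Cotree V)
    (hnodup : (Cotree.leavesList T).Nodup) :
    {x : V | ∃ e ∈ F, x ∈ e}.ncard ≤ 2 * k ∧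
    {n : Cotree V | Cotree.Subtree n T ∧ ∃ x y : V, x ≠ y ∧
      (∃ e ∈ F, x ∈ e) ∧ (∃ e ∈ F, y ∈ e) ∧ Cotree.IsLcaAt x y n}.ncard ≤ 2 * k := by
  have haffected := ncard_setOf_exists_mem_sym2_le (toFinite F)
  refine ⟨by omega, ?_⟩
  calc _ = (Cotree.lcaNodes {x | ∃ e ∈ F, x ∈ e} T).ncard := rfl
    _ ≤ ({x | ∃ e ∈ F, x ∈ e} ∩ T.leafSet).ncard - 1 := Cotree.ncard_lcaNodes_le _ T hnodup
    _ ≤ {x | ∃ e ∈ F, x ∈ e}.ncard := (Nat.sub_le _ _).trans (ncard_le_ncard inter_subset_left)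
    _ ≤ 2 * k := by omega

/-- Suppose `G` is reduced: every module of `G` strictly contained in a
connected component is an independent set of size at most `k+1`, no connected component
of `G` is a series composition of two nonempty graphs, and no connected component of
`G` is a cograph. If deleting a set `F` of at most `k` edges from `G` yields a `P₄`-free
graph (a cograph) represented by the cotree `T`, then `T` has at most `2k` affected
leaves (vertices incident to an edge of `F`) and at most `2k` affected internal nodes
(least common ancestors of two distinct affected leaves). -/
theorem stmt16 {V : Type} [Finite V] (G : SimpleGraph V) (k : ℕ)
    (hmod : ∀ M : Set V, IsModule G M → (∃ z ∉ M, ∃ w ∈ M, G.Reachable w z) →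
      (∀ x ∈ M, ∀ y ∈ M, ¬ G.Adj x y) ∧ M.ncard ≤ k + 1)
    (hnoseries : ∀ A B : Set V, A.Nonempty → B.Nonempty → Disjoint A B →
      (∀ x ∈ A ∪ B, ∀ y ∉ A ∪ B, ¬ G.Adj x y) → ¬ (∀ a ∈ A, ∀ b ∈ B, G.Adj a b))
    (hnocographcomp : ∀ v : V, ¬ P4Free (G.induce {u : V | G.Reachable v u}))
    (F : Set (Sym2 V)) (hF : F ⊆ G.edgeSet) (hk : F.ncard ≤ k)
    (hfree : P4Free (G.deleteEdges F))
    (T : Cotree V)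
    (hrep : ∀ x y : V, (G.deleteEdges F).Adj x y ↔ Cotree.adj x y T)
    (hnodup : (Cotree.leavesList T).Nodup)
    (hall : ∀ v : V, Cotree.memLeaf v T) :
    {x : V | ∃ e ∈ F, x ∈ e}.ncard ≤ 2 * k ∧
    {n : Cotree V | Cotree.Subtree n T ∧ ∃ x y : V, x ≠ y ∧
      (∃ e ∈ F, x ∈ e) ∧ (∃ e ∈ F, y ∈ e) ∧ Cotree.IsLcaAt x y n}.ncard ≤ 2 * k :=
  stmt16_general k F hk T hnodup
end

section
/- Let G = (V,E) be a graph with a dominating vertex q (adjacent to all other vertices), and consider edge-bicolorings B': E → {0,1} such that B'(e) = 1 for every edge e not incident to q. Then there exists such a valid edge-bicoloring (every triangle has 0, 2, or 3 edges colored 1) of weight at most |E \ δ(q)| + k if and only if the graph G − q has a vertex cover of size at most k. -/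
/-!
Colour every edge off `q` with 1. A triangle `x q y` through `q` then already has its edge
`xy` coloured 1, so it is valid exactly when `qx` or `qy` is coloured 1: the vertices `v`
with `qv` coloured 1 form a vertex cover of `G - q`, and they account for the whole excess
of the weight over `|E ∖ δ(q)|`. Conversely a cover `S` gives the colouring that puts 1 on
the edges off `q` and on the edges from `q` to `S`.
-/

/-- An edge-bicoloring `B` (where `true` means color 1) is valid for `G` if no
triangle of `G` contains exactly one edge colored 1 (every triangle has 0, 2 or 3
edges colored 1). -/
def ValidBicoloring {V : Type*} (G : SimpleGraph V) (B : Sym2 V → Bool) : Prop :=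
  ∀ x y z : V, G.Adj x y → G.Adj y z → G.Adj x z →
    ((if B s(x, y) then 1 else 0) + (if B s(y, z) then 1 else 0) +
      (if B s(x, z) then 1 else 0) : ℕ) ≠ 1

open Classical in
noncomputable def coverColoring {V : Type*} (q : V) (S : Set V) (e : Sym2 V) : Bool :=
  decide (q ∉ e ∨ ∃ v ∈ S, v ∈ e)

section

variable {V : Type*} {G : SimpleGraph V} {B : Sym2 V → Bool} {q : V}

theorem validBicoloring_iff :
    ValidBicoloring G B ↔ ∀ x y z : V, G.Adj x y → G.Adj y z → G.Adj x z →
      B s(x, y) = true → B s(y, z) = true ∨ B s(x, z) = true := by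
  constructor
  · intro h x y z hxy hyz hxz hB
    by_contra! hne
    exact h x y z hxy hyz hxz (by simp_all)
  · intro h x y z hxy hyz hxz
    have hx := h x y z hxy hyz hxz
    have hy := h y z x hyz hxz.symm hxy.symm
    have hz := h z x y hxz.symm hxy hyz.symm
    rw [Sym2.eq_swap (a := z) (b := x)] at hy hz
    rw [Sym2.eq_swap (a := y) (b := x)] at hy
    rw [Sym2.eq_swap (a := z) (b := y)] at hz
    revert hx hy hz
    cases B s(x, y) <;> cases B s(y, z) <;> cases B s(x, z) <;> simp

theorem ncard_colored_edges_eq [Finite V] (hoff : ∀ e ∈ G.edgeSet, q ∉ e → B e = true) :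
    {e ∈ G.edgeSet | B e = true}.ncard =
      {e ∈ G.edgeSet | q ∉ e}.ncard + {v | G.Adj q v ∧ B s(q, v) = true}.ncard := by
  have hsplit : {e ∈ G.edgeSet | B e = true} =
      {e ∈ G.edgeSet | q ∉ e} ∪ (fun v => s(q, v)) '' {v | G.Adj q v ∧ B s(q, v) = true} := by
    ext e
    constructor
    · rintro ⟨he, hB⟩
      by_cases hqe : q ∈ e
      · obtain ⟨v, rfl⟩ := Sym2.mem_iff_exists.mp hqe
        exact Or.inr ⟨v, ⟨he, hB⟩, rfl⟩
      · exact Or.inl ⟨he, hqe⟩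
    · rintro (⟨he, hqe⟩ | ⟨v, ⟨hv, hB⟩, rfl⟩)
      · exact ⟨he, hoff e he hqe⟩
      · exact ⟨hv, hB⟩
  have hdisj : Disjoint {e ∈ G.edgeSet | q ∉ e}
      ((fun v => s(q, v)) '' {v | G.Adj q v ∧ B s(q, v) = true}) := by
    rw [Set.disjoint_left]
    rintro _ ⟨_, hqe⟩ ⟨v, _, rfl⟩
    exact hqe (Sym2.mem_mk_left q v)
  rw [hsplit, Set.ncard_union_eq hdisj,
    Set.ncard_image_of_injective _ fun _ _ h => Sym2.congr_right.mp h]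

theorem exists_mem_of_validBicoloring (hq : ∀ v : V, v ≠ q → G.Adj q v)
    (hB : ValidBicoloring G B) (hoff : ∀ e ∈ G.edgeSet, q ∉ e → B e = true) :
    ∀ e ∈ G.edgeSet, q ∉ e → ∃ v ∈ {v | G.Adj q v ∧ B s(q, v) = true}, v ∈ e := by
  intro e he hqe
  induction e using Sym2.ind with
  | _ x y =>
    have hx : x ≠ q := fun h => hqe (h ▸ Sym2.mem_mk_left x y)
    have hy : y ≠ q := fun h => hqe (h ▸ Sym2.mem_mk_right x y)
    rcases validBicoloring_iff.mp hB x y q he (hq y hy).symm (hq x hx).symm (hoff _ he hqe)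
      with h | h
    · exact ⟨y, ⟨hq y hy, by rwa [Sym2.eq_swap]⟩, Sym2.mem_mk_right x y⟩
    · exact ⟨x, ⟨hq x hx, by rwa [Sym2.eq_swap]⟩, Sym2.mem_mk_left x y⟩

theorem coverColoring_eq_true_iff {S : Set V} {e : Sym2 V} :
    coverColoring q S e = true ↔ q ∉ e ∨ ∃ v ∈ S, v ∈ e := by
  simp [coverColoring]

theorem coverColoring_mk_eq_true_iff {S : Set V} (hqS : q ∉ S) (v : V) :
    coverColoring q S s(q, v) = true ↔ v ∈ S := by
  rw [coverColoring_eq_true_iff]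
  constructor
  · rintro (h | ⟨w, hw, hwe⟩)
    · exact absurd (Sym2.mem_mk_left q v) h
    · rcases Sym2.mem_iff.mp hwe with rfl | rfl
      · exact absurd hw hqS
      · exact hw
  · exact fun hv => Or.inr ⟨v, hv, Sym2.mem_mk_right q v⟩

theorem validBicoloring_coverColoring {S : Set V}
    (hS : ∀ e ∈ G.edgeSet, q ∉ e → ∃ v ∈ S, v ∈ e) :
    ValidBicoloring G (coverColoring q S) := by
  refine validBicoloring_iff.mpr fun x y z hxy hyz hxz _ => ?_
  simp only [coverColoring_eq_true_iff]
  by_cases hyz' : q ∈ s(y, z)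
  · by_cases hxz' : q ∈ s(x, z)
    · have hqz : q = z := by
        rcases Sym2.mem_iff.mp hyz' with h₁ | h₁ <;> rcases Sym2.mem_iff.mp hxz' with h₂ | h₂
        exacts [absurd (h₂.symm.trans h₁) hxy.ne, absurd (h₁.symm.trans h₂) hyz.ne, h₁, h₁]
      subst hqz
      have hq_xy : q ∉ s(x, y) := by
        rw [Sym2.mem_iff]
        rintro (h | h)
        exacts [hxz.ne h.symm, hyz.ne h.symm]
      obtain ⟨v, hvS, hv⟩ := hS _ hxy hq_xy
      rcases Sym2.mem_iff.mp hv with rfl | rfl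
      · exact Or.inr (Or.inr ⟨v, hvS, Sym2.mem_mk_left v q⟩)
      · exact Or.inl (Or.inr ⟨v, hvS, Sym2.mem_mk_left v q⟩)
    · exact Or.inr (Or.inl hxz')
  · exact Or.inl (Or.inl hyz')

end

/-- Let `G` have a dominating vertex `q`. There is a valid
edge-bicoloring of `G` coloring every edge not incident to `q` with 1 and of weight
at most `|E ∖ δ(q)| + k` iff the graph `G − q` has a vertex cover of size at most `k`. -/
theorem stmt18 {V : Type*} [Finite V] (G : SimpleGraph V) (q : V)
    (hq : ∀ v : V, v ≠ q → G.Adj q v) (k : ℕ) :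
    (∃ B : Sym2 V → Bool,
      (∀ e ∈ G.edgeSet, q ∉ e → B e = true) ∧
      ValidBicoloring G B ∧
      {e ∈ G.edgeSet | B e = true}.ncard ≤ {e ∈ G.edgeSet | q ∉ e}.ncard + k) ↔
    (∃ S : Set V, q ∉ S ∧ S.ncard ≤ k ∧
      ∀ e ∈ G.edgeSet, q ∉ e → ∃ v ∈ S, v ∈ e) := by
  constructor
  · rintro ⟨B, hoff, hB, hweight⟩
    refine ⟨{v | G.Adj q v ∧ B s(q, v) = true}, fun h => h.1.ne rfl, ?_,
      exists_mem_of_validBicoloring hq hB hoff⟩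
    rw [ncard_colored_edges_eq hoff] at hweight
    omega
  · rintro ⟨S, hqS, hSk, hS⟩
    have hoff : ∀ e ∈ G.edgeSet, q ∉ e → coverColoring q S e = true :=
      fun e _ hqe => coverColoring_eq_true_iff.mpr (Or.inl hqe)
    refine ⟨coverColoring q S, hoff, validBicoloring_coverColoring hS, ?_⟩
    have hsub : {v | G.Adj q v ∧ coverColoring q S s(q, v) = true} ⊆ S :=
      fun v hv => (coverColoring_mk_eq_true_iff hqS v).mp hv.2
    rw [ncard_colored_edges_eq hoff]
    have := Set.ncard_le_ncard hsub
    omega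
end

section
/- Let G = (V,E) be a graph and define G' with vertex set V' = {v_1, v_2, v_3 : v ∈ V} and edge set E' = {u_1 v_2, u_1 v_3, u_2 v_3 : u = v or uv ∈ E}. Then G' is 3-colorable (the sets {v_1 : v ∈ V}, {v_2 : v ∈ V}, {v_3 : v ∈ V} are independent sets), and for any valid edge-bicoloring B' of G' (every triangle has 0, 2 or 3 edges colored 1) that colors all edges of the form u_i u_j (same underlying vertex) with 0, the six edges u_i v_j associated with a single edge uv of G all receive the same color. -/
/-- The graph `G'` on `V × {1,2,3}` with `(u,i)` adjacent to `(v,j)` iff `i ≠ j` and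
(`u = v` or `uv ∈ E(G)`); this realizes the edge set
`{u₁v₂, u₁v₃, u₂v₃ : u = v or uv ∈ E}`. -/
def tripleGraph {V : Type*} (G : SimpleGraph V) : SimpleGraph (V × Fin 3) where
  Adj a b := a.2 ≠ b.2 ∧ (a.1 = b.1 ∨ G.Adj a.1 b.1)
  symm := by
    constructor
    rintro ⟨u, i⟩ ⟨v, j⟩ ⟨hij, h⟩
    exact ⟨hij.symm, by cases h with
      | inl h => exact Or.inl h.symm
      | inr h => exact Or.inr h.symm⟩
  loopless := by constructor; rintro ⟨u, i⟩ ⟨h, -⟩; exact h rfl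

/-! In the triangle `(u, a), (u, b), (v, c)` of `tripleGraph G` the edge `(u, a)(u, b)` has
color 0, so validity forces the other two edges to have equal colors. Hence the color of
`(u, i)(v, j)` is unchanged when `i` or `j` alone is changed, and with three copies any two
such pairs `(i, j)`, `(i', j')` are linked by a chain of such moves. -/

theorem ValidBicoloring.eq_of_adj_of_eq_false {V : Type*} {G : SimpleGraph V}
    {B : Sym2 V → Bool} (hB : ValidBicoloring G B) {x y z : V} (hxy : G.Adj x y)
    (hyz : G.Adj y z) (hxz : G.Adj x z) (h0 : B s(x, y) = false) :
    B s(y, z) = B s(x, z) := by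
  have h := hB x y z hxy hyz hxz
  rw [h0] at h
  revert h
  cases B s(y, z) <;> cases B s(x, z) <;> simp

theorem eq_on_offDiag_of_invariant {ι α : Type*} (h3 : 3 ≤ ENat.card ι) {f : ι → ι → α}
    (hfst : ∀ a b c, a ≠ c → b ≠ c → f a c = f b c)
    (hsnd : ∀ a b c, a ≠ b → a ≠ c → f a b = f a c)
    {i j i' j' : ι} (hij : i ≠ j) (hij' : i' ≠ j') : f i j = f i' j' := by
  by_cases hi'j : i' = j
  · subst hi'j
    by_cases hj'i : j' = i
    · subst hj'i
      obtain ⟨k, hki, hkj⟩ := ENat.exists_ne_ne_of_three_le h3 j' i'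
      calc f j' i' = f k i' := hfst _ _ _ hij hkj
        _ = f k j' := hsnd _ _ _ hkj hki
        _ = f i' j' := hfst _ _ _ hki hij'
    · exact (hsnd _ _ _ hij (Ne.symm hj'i)).trans (hfst _ _ _ (Ne.symm hj'i) hij')
  · exact (hfst _ _ _ hij hi'j).trans (hsnd _ _ _ hi'j hij')

namespace tripleGraph

variable {V : Type*} {G : SimpleGraph V}

theorem adj_of_adj {u v : V} (huv : G.Adj u v) {i j : Fin 3} (hij : i ≠ j) :
    (tripleGraph G).Adj (u, i) (v, j) :=
  ⟨hij, Or.inr huv⟩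

theorem adj_self (u : V) {i j : Fin 3} (hij : i ≠ j) : (tripleGraph G).Adj (u, i) (u, j) :=
  ⟨hij, Or.inl rfl⟩

theorem not_adj_same_copy (i : Fin 3) (u v : V) : ¬ (tripleGraph G).Adj (u, i) (v, i) :=
  fun h => h.1 rfl

theorem color_eq_of_fst_ne {B : Sym2 (V × Fin 3) → Bool} (hB : ValidBicoloring (tripleGraph G) B)
    {u v : V} (huv : G.Adj u v) (hu : ∀ i j : Fin 3, i ≠ j → B s((u, i), (u, j)) = false)
    {a b c : Fin 3} (hac : a ≠ c) (hbc : b ≠ c) : B s((u, a), (v, c)) = B s((u, b), (v, c)) := by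
  rcases eq_or_ne a b with rfl | hab
  · rfl
  · exact (hB.eq_of_adj_of_eq_false (adj_self u hab) (adj_of_adj huv hbc) (adj_of_adj huv hac)
      (hu a b hab)).symm

theorem color_eq_of_snd_ne {B : Sym2 (V × Fin 3) → Bool} (hB : ValidBicoloring (tripleGraph G) B)
    {u v : V} (huv : G.Adj u v) (hv : ∀ i j : Fin 3, i ≠ j → B s((v, i), (v, j)) = false)
    {a b c : Fin 3} (hab : a ≠ b) (hac : a ≠ c) : B s((u, a), (v, b)) = B s((u, a), (v, c)) := by
  simp only [Sym2.eq_swap (a := (u, a))]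
  exact color_eq_of_fst_ne hB huv.symm hv hab.symm hac.symm

end tripleGraph

/-- The three copies of `V` are independent sets of `tripleGraph G`
(so it is 3-colorable), and every valid edge-bicoloring of `tripleGraph G` that
colors all edges between copies of a single vertex with 0 assigns the same color to
the six edges associated with a single edge `uv` of `G`. -/
theorem stmt19 {V : Type*} (G : SimpleGraph V) :
    (∀ i : Fin 3, ∀ u v : V, ¬ (tripleGraph G).Adj (u, i) (v, i)) ∧
    (∀ B : Sym2 (V × Fin 3) → Bool,
      ValidBicoloring (tripleGraph G) B →
      (∀ v : V, ∀ i j : Fin 3, i ≠ j → B s((v, i), (v, j)) = false) →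
      ∀ u v : V, G.Adj u v → ∀ i j i' j' : Fin 3, i ≠ j → i' ≠ j' →
        B s((u, i), (v, j)) = B s((u, i'), (v, j'))) := by
  refine ⟨tripleGraph.not_adj_same_copy, fun B hB hB0 u v huv i j i' j' hij hij' => ?_⟩
  exact eq_on_offDiag_of_invariant (f := fun a b => B s((u, a), (v, b))) (by simp)
    (fun _ _ _ => tripleGraph.color_eq_of_fst_ne hB huv (hB0 u))
    (fun _ _ _ => tripleGraph.color_eq_of_snd_ne hB huv (hB0 v)) hij hij'
end
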